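/- arXiv:2409.01418 — 2 statements merged into one kernel-verified Lean document; each statement's English description precedes it below -/
import Mathlib

section
/- Theorem (single-target segment normalization, real case): Let U be a real unitary on ℂ² ⊗ ℂ^m that is block diagonal over the control basis, U = Σ_x U_x ⊗ |x⟩⟨x| with each U_x a real 2×2 orthogonal matrix, and let ψ be any real unit vector. Then there exist angles θ_x such that U' = Σ_x R_y(θ_x) ⊗ |x⟩⟨x| satisfies U' ψ = U ψ. -/
open Matrix Kronecker

noncomputable def Ry (θ : ℝ) : Matrix (Fin 2) (Fin 2) ℝ :=
  !![Real.cos (θ/2), -Real.sin (θ/2); Real.sin (θ/2), Real.cos (θ/2)]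

lemma key (U : Matrix (Fin 2) (Fin 2) ℝ) (hU : U * Uᵀ = 1) (v : Fin 2 → ℝ) :
    ∃ θ : ℝ, (Ry θ).mulVec v = U.mulVec v := by
  have hU' : Uᵀ * U = 1 := mul_eq_one_comm.mp hU
  have h00 := congrFun (congrFun hU' 0) 0
  have h01 := congrFun (congrFun hU' 0) 1
  have h11 := congrFun (congrFun hU' 1) 1
  simp [Matrix.mul_apply, Fin.sum_univ_two, Matrix.one_apply] at h00 h01 h11
  set a := U 0 0; set b := U 0 1; set c := U 1 0; set d := U 1 1
  set w : Fin 2 → ℝ := U.mulVec v with hw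
  have hw0 : w 0 = a * v 0 + b * v 1 := by
    simp [hw, Matrix.mulVec, dotProduct, Fin.sum_univ_two]
    rfl
  have hw1 : w 1 = c * v 0 + d * v 1 := by
    simp [hw, Matrix.mulVec, dotProduct, Fin.sum_univ_two]
    rfl
  have hnorm : w 0 ^ 2 + w 1 ^ 2 = v 0 ^ 2 + v 1 ^ 2 := by
    rw [hw0, hw1]
    linear_combination v 0 ^ 2 * h00 + v 1 ^ 2 * h11 + (2 * v 0 * v 1) * h01
  set zv : ℂ := ⟨v 0, v 1⟩ with hzv
  set zw : ℂ := ⟨w 0, w 1⟩ with hzw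
  have habs : ‖zw‖ = ‖zv‖ := by
    simp only [Complex.norm_def, Complex.normSq_mk, hzv, hzw]
    rw [show w 0 * w 0 + w 1 * w 1 = v 0 * v 0 + v 1 * v 1 by nlinarith [hnorm]]
  by_cases hv : zv = 0
  · have hv0 : v 0 = 0 := congrArg Complex.re hv
    have hv1 : v 1 = 0 := congrArg Complex.im hv
    have hwz : zw = 0 := by
      have := habs
      rw [hv, norm_zero] at this
      exact norm_eq_zero.mp this
    refine ⟨0, ?_⟩
    funext i
    fin_cases i <;>
      simp [Matrix.mulVec, dotProduct, Fin.sum_univ_two, hv0, hv1, hw0, hw1, Ry]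
  · set φ := (zw / zv).arg with hφ
    have habs1 : ‖zw / zv‖ = 1 := by
      rw [norm_div, habs, div_self]
      simpa using hv
    have hexp : Complex.exp (φ * Complex.I) = zw / zv := by
      have := Complex.norm_mul_exp_arg_mul_I (zw / zv)
      rwa [habs1, Complex.ofReal_one, one_mul] at this
    have hmul : Complex.exp (φ * Complex.I) * zv = zw := by
      rw [hexp, div_mul_cancel₀ _ hv]
    rw [Complex.exp_mul_I] at hmul
    have hre := congrArg Complex.re hmul
    have him := congrArg Complex.im hmul
    simp [add_mul, hzv, hzw, Complex.cos_ofReal_re, Complex.sin_ofReal_re] at hre him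
    refine ⟨2 * φ, ?_⟩
    funext i
    have h2 : 2 * φ / 2 = φ := by ring
    fin_cases i <;>
      simp [Matrix.mulVec, dotProduct, Fin.sum_univ_two, Ry, h2] <;>
      linarith [hre, him, hw0, hw1]

lemma block_mulVec {m : ℕ} (A : Fin m → Matrix (Fin 2) (Fin 2) ℝ)
    (ψ : Fin 2 × Fin m → ℝ) (i : Fin 2) (y : Fin m) :
    (∑ x : Fin m, A x ⊗ₖ Matrix.single x x (1:ℝ)).mulVec ψ (i, y) =
      ∑ j : Fin 2, A y i j * ψ (j, y) := by
  simp only [Matrix.mulVec, dotProduct, Finset.sum_apply,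
    Matrix.sum_apply, Matrix.kroneckerMap_apply, Matrix.single,
    Matrix.of_apply, Fintype.sum_prod_type]
  simp [ite_and, mul_ite, mul_one, mul_zero, ite_mul, zero_mul,
    Finset.sum_ite_eq, Finset.sum_ite_eq']

/-- Single-target segment normalization (real case): a block-diagonal real
orthogonal operator `Σ_x U_x ⊗ |x⟩⟨x|` acts on any fixed real unit state like
a multi-controlled Y-rotation `Σ_x R_y(θ_x) ⊗ |x⟩⟨x|`. -/
theorem single_target_normalization {m : ℕ}
    (U : Fin m → Matrix (Fin 2) (Fin 2) ℝ) (hU : ∀ x, U x * (U x)ᵀ = 1)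
    (ψ : EuclideanSpace ℝ (Fin 2 × Fin m)) (hψ : ‖ψ‖ = 1) :
    ∃ θ : Fin m → ℝ,
      (∑ x : Fin m, Ry (θ x) ⊗ₖ Matrix.single x x (1:ℝ)).mulVec ψ =
      (∑ x : Fin m, U x ⊗ₖ Matrix.single x x (1:ℝ)).mulVec ψ := by
  choose θ hθ using fun x => key (U x) (hU x) (fun j => ψ (j, x))
  refine ⟨θ, ?_⟩
  funext p
  obtain ⟨i, y⟩ := p
  rw [block_mulVec, block_mulVec]
  have := congrFun (hθ y) i
  simpa [Matrix.mulVec, dotProduct] using this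
end

section
/- The three-qubit circuit consisting of: R_y(π/2) on q₀; R_y(π/2) on q₁; R_y(π/4) on q₂; CNOT with control q₁ targeting q₂; R_y(−π/2) on q₂; CNOT with control q₀ targeting q₂; R_y(π/4) on q₂ — applied to |000⟩ — produces the state √(2/8)|000⟩ − √(1/8)|100⟩ + √(1/8)|010⟩ + √(1/8)|101⟩ + √(1/8)|011⟩ + √(2/8)|111⟩ (qubit order q₀q₁q₂). -/
open Matrix Kronecker Real

/-- Basis indices for three qubits, in order `(q₀, q₁, q₂)`. -/
abbrev QIdx := Fin 2 × Fin 2 × Fin 2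

/-- `R_y(θ)` on qubit `q₀`. -/
noncomputable def g0 (θ : ℝ) : Matrix QIdx QIdx ℝ :=
  Ry θ ⊗ₖ ((1 : Matrix (Fin 2) (Fin 2) ℝ) ⊗ₖ (1 : Matrix (Fin 2) (Fin 2) ℝ))

/-- `R_y(θ)` on qubit `q₁`. -/
noncomputable def g1 (θ : ℝ) : Matrix QIdx QIdx ℝ :=
  (1 : Matrix (Fin 2) (Fin 2) ℝ) ⊗ₖ (Ry θ ⊗ₖ (1 : Matrix (Fin 2) (Fin 2) ℝ))

/-- `R_y(θ)` on qubit `q₂`. -/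
noncomputable def g2 (θ : ℝ) : Matrix QIdx QIdx ℝ :=
  (1 : Matrix (Fin 2) (Fin 2) ℝ) ⊗ₖ ((1 : Matrix (Fin 2) (Fin 2) ℝ) ⊗ₖ Ry θ)

/-- CNOT with control `q₁`, target `q₂`: flips bit `q₂` when `q₁ = 1`. -/
def cnot12 : Matrix QIdx QIdx ℝ :=
  Matrix.of fun i j =>
    if i.1 = j.1 ∧ i.2.1 = j.2.1 ∧ i.2.2 = (if j.2.1 = 1 then j.2.2 + 1 else j.2.2)
    then 1 else 0

/-- CNOT with control `q₀`, target `q₂`: flips bit `q₂` when `q₀ = 1`. -/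
def cnot02 : Matrix QIdx QIdx ℝ :=
  Matrix.of fun i j =>
    if i.1 = j.1 ∧ i.2.1 = j.2.1 ∧ i.2.2 = (if j.1 = 1 then j.2.2 + 1 else j.2.2)
    then 1 else 0

/-- The ground state `|000⟩`. -/
def e000 : QIdx → ℝ := fun i => if i = (0, 0, 0) then 1 else 0

/-- Target state `√(2/8)|000⟩ − √(1/8)|100⟩ + √(1/8)|010⟩ + √(1/8)|101⟩ +
√(1/8)|011⟩ + √(2/8)|111⟩` (qubit order `q₀q₁q₂`). -/
noncomputable def target : QIdx → ℝ := fun i =>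
  if i = (0, 0, 0) then Real.sqrt (2/8)
  else if i = (1, 0, 0) then -Real.sqrt (1/8)
  else if i = (0, 1, 0) then Real.sqrt (1/8)
  else if i = (1, 0, 1) then Real.sqrt (1/8)
  else if i = (0, 1, 1) then Real.sqrt (1/8)
  else if i = (1, 1, 1) then Real.sqrt (2/8)
  else 0

/-!
Apart from the first layer, every gate is a rotation of `q₂` or a CNOT targeting `q₂`, so on the
branch `q₀ = a, q₁ = b` the circuit acts on `q₂` as `R_y(π/4) Xᵃ R_y(-π/2) Xᵇ R_y(π/4)`.
Since rotations compose additively and `X R_y(θ) X = R_y(-θ)`, this collapses to `R_y(0)`,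
`R_y(-π/2) X`, `R_y(π/2) X` or `R_y(π)`, which sends `|0⟩` to an explicit state; the first layer
puts amplitude `1/2` on `|ab0⟩` for every branch.
-/

def fiber (v : QIdx → ℝ) (a b : Fin 2) : Fin 2 → ℝ := fun c => v (a, b, c)

lemma funext_fiber {v w : QIdx → ℝ} (h : ∀ a b, fiber v a b = fiber w a b) : v = w :=
  funext fun ⟨a, b, c⟩ => congrFun (h a b) c

def pauliX : Matrix (Fin 2) (Fin 2) ℝ := !![0, 1; 1, 0]

def ctrlX (b : Fin 2) : Matrix (Fin 2) (Fin 2) ℝ := if b = 1 then pauliX else 1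

lemma Ry_zero : Ry 0 = 1 := by
  ext i j; fin_cases i <;> fin_cases j <;> simp [Ry]

lemma Ry_mul_Ry (α β : ℝ) : Ry α * Ry β = Ry (α + β) := by
  ext i j
  fin_cases i <;> fin_cases j <;>
    simp [Ry, Matrix.mul_apply, Fin.sum_univ_two, add_div, cos_add, sin_add] <;> ring

lemma pauliX_mul_Ry (θ : ℝ) : pauliX * Ry θ = Ry (-θ) * pauliX := by
  ext i j
  fin_cases i <;> fin_cases j <;>
    simp [Ry, pauliX, Matrix.mul_apply, Fin.sum_univ_two, neg_div]

lemma pauliX_mul_pauliX : pauliX * pauliX = 1 := by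
  ext i j; fin_cases i <;> fin_cases j <;> simp [pauliX]

lemma Ry_mulVec_Ry_mulVec (α β : ℝ) (v : Fin 2 → ℝ) :
    Ry α *ᵥ (Ry β *ᵥ v) = Ry (α + β) *ᵥ v := by
  rw [mulVec_mulVec, Ry_mul_Ry]

lemma pauliX_mulVec_Ry_mulVec (θ : ℝ) (v : Fin 2 → ℝ) :
    pauliX *ᵥ (Ry θ *ᵥ v) = Ry (-θ) *ᵥ (pauliX *ᵥ v) := by
  rw [mulVec_mulVec, pauliX_mul_Ry, ← mulVec_mulVec]

lemma pauliX_mulVec_pauliX_mulVec (v : Fin 2 → ℝ) : pauliX *ᵥ (pauliX *ᵥ v) = v := by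
  rw [mulVec_mulVec, pauliX_mul_pauliX, one_mulVec]

lemma fiber_g2_mulVec (θ : ℝ) (v : QIdx → ℝ) (a b : Fin 2) :
    fiber (g2 θ *ᵥ v) a b = Ry θ *ᵥ fiber v a b := by
  ext c
  simp [fiber, g2, mulVec, dotProduct, Fintype.sum_prod_type, one_apply]

lemma fiber_cnot12_mulVec (v : QIdx → ℝ) (a b : Fin 2) :
    fiber (cnot12 *ᵥ v) a b = ctrlX b *ᵥ fiber v a b := by
  ext c
  fin_cases a <;> fin_cases b <;> fin_cases c <;>
    simp [fiber, cnot12, ctrlX, pauliX, mulVec, dotProduct, Fintype.sum_prod_type, one_apply]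

lemma fiber_cnot02_mulVec (v : QIdx → ℝ) (a b : Fin 2) :
    fiber (cnot02 *ᵥ v) a b = ctrlX a *ᵥ fiber v a b := by
  ext c
  fin_cases a <;> fin_cases b <;> fin_cases c <;>
    simp [fiber, cnot02, ctrlX, pauliX, mulVec, dotProduct, Fintype.sum_prod_type, one_apply]

lemma fiber_g1_g0_mulVec_e000 (a b : Fin 2) :
    fiber (g1 (π/2) *ᵥ (g0 (π/2) *ᵥ e000)) a b = (1/2 : ℝ) • Pi.single 0 1 := by
  ext c
  fin_cases a <;> fin_cases b <;> fin_cases c <;>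
    simp [fiber, g0, g1, Ry, e000, mulVec, dotProduct, Fintype.sum_prod_type, one_apply,
      show π / 2 / 2 = π / 4 by ring, cos_pi_div_four, sin_pi_div_four] <;>
    ring_nf <;> norm_num

lemma sqrt_two_div_eight : √(2/8 : ℝ) = 1/2 := by
  rw [show (2/8 : ℝ) = (1/2)^2 by norm_num, sqrt_sq (by norm_num)]

lemma sqrt_one_div_eight : √(1/8 : ℝ) = √2/4 := by
  rw [show (1/8 : ℝ) = 2 * (1/4)^2 by norm_num, sqrt_mul zero_le_two, sqrt_sq (by norm_num)]
  ring

lemma q2_gates_mulVec_eq_fiber_target (a b : Fin 2) :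
    Ry (π/4) *ᵥ (ctrlX a *ᵥ (Ry (-(π/2)) *ᵥ (ctrlX b *ᵥ (Ry (π/4) *ᵥ (1/2 : ℝ) • Pi.single 0 1))))
      = fiber target a b := by
  simp only [mulVec_smul]
  have h₀₀ : π/4 + (-(π/2) + π/4) = 0 := by ring
  have h₀₁ : π/4 + (-(π/2) + -(π/4)) = -(π/2) := by ring
  have h₁₀ : π/4 + -(-(π/2) + π/4) = π/2 := by ring
  have h₁₁ : π/4 + -(-(π/2) + -(π/4)) = π := by ring
  fin_cases a <;> fin_cases b <;>
    simp only [ctrlX, Fin.isValue, Fin.zero_eta, Fin.mk_one, if_true, zero_ne_one, if_false,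
      one_mulVec, Ry_mulVec_Ry_mulVec, pauliX_mulVec_Ry_mulVec, pauliX_mulVec_pauliX_mulVec,
      h₀₀, h₀₁, h₁₀, h₁₁, Ry_zero] <;>
    ext c <;> fin_cases c <;>
    simp only [fiber, target, Prod.mk.injEq, Fin.isValue, Fin.zero_eta, Fin.mk_one, zero_ne_one,
      one_ne_zero, and_false, false_and, and_self, if_true, if_false, sqrt_two_div_eight,
      sqrt_one_div_eight] <;>
    simp [Ry, pauliX, dotProduct, neg_div, show π / 2 / 2 = π / 4 by ring] <;> ring

/-- The circuit of Figure 1(c) prepares the target state of Equation 4. -/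
theorem circuit_prepares_target :
    (g2 (π/4) * cnot02 * g2 (-(π/2)) * cnot12 * g2 (π/4) * g1 (π/2) * g0 (π/2)).mulVec e000
      = target := by
  refine funext_fiber fun a b => ?_
  rw [← q2_gates_mulVec_eq_fiber_target, ← fiber_g1_g0_mulVec_e000 a b]
  simp only [← mulVec_mulVec, fiber_g2_mulVec, fiber_cnot02_mulVec, fiber_cnot12_mulVec]
end
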